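/- With Γ ⊂ ℝⁿ a nonempty compact C¹-smooth embedded submanifold of dimension k (1 ≤ k ≤ n−1), ρ > 0 satisfying δ(p, r) > r/2 for all p ∈ Γ and 0 < r < 2ρ, and W ⊂ ℝ^{n+1} defined as below: for every point x ∈ Γ the tangent cone of W at (x, 0) satisfies Tan(W, (x,0)) = T_xΓ × [0, +∞), where T_xΓ ⊆ ℝⁿ is the tangent space to Γ at x and ℝ^{n+1} is identified with ℝⁿ × ℝ. -/

import Mathlib

open Metric Set Filter
open scoped RealInnerProductSpace

noncomputable section

/-- `ℝⁿ` as a Euclidean space. -/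
abbrev En (n : ℕ) : Type := EuclideanSpace ℝ (Fin n)

/-- `ℝ^{n+1}` identified with `ℝⁿ × ℝ`, with the Euclidean (L²) norm. -/
abbrev En1 (n : ℕ) : Type := WithLp 2 (En n × ℝ)

/-- The identification of the plain product `ℝⁿ × ℝ` with the L²-product. -/
def emb1 (n : ℕ) : En n × ℝ → En1 n := (WithLp.equiv 2 (En n × ℝ)).symm

/-- First (ℝⁿ) coordinate of a point of `ℝ^{n+1} = ℝⁿ × ℝ`. -/
def fst1 (n : ℕ) (q : En1 n) : En n := ((WithLp.equiv 2 (En n × ℝ)) q).1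

/-- Second (ℝ) coordinate of a point of `ℝ^{n+1} = ℝⁿ × ℝ`. -/
def snd1 (n : ℕ) (q : En1 n) : ℝ := ((WithLp.equiv 2 (En n × ℝ)) q).2

/-- The (Federer) tangent cone of a set `S` at a point `p`: all vectors `w` for which
there are sequences `q i ∈ S` and `c i > 0` with `q i → p` and `c i • (q i − p) → w`. -/
def fTan {E : Type*} [NormedAddCommGroup E] [NormedSpace ℝ E] (S : Set E) (p : E) : Set E :=
  {w | ∃ (q : ℕ → E) (c : ℕ → ℝ), (∀ i, q i ∈ S) ∧ (∀ i, 0 < c i) ∧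
    Filter.Tendsto q Filter.atTop (nhds p) ∧
    Filter.Tendsto (fun i => c i • (q i - p)) Filter.atTop (nhds w)}

/-- A unit normal to `Γ` at `p`: a unit vector orthogonal to the tangent space
(= tangent cone, for a C¹ submanifold) of `Γ` at `p`. -/
def IsUnitNormal {n : ℕ} (Γ : Set (En n)) (p ν : En n) : Prop :=
  ‖ν‖ = 1 ∧ ∀ w ∈ fTan Γ p, inner ℝ ν w = (0 : ℝ)

/-- `δ(p, r) = inf_ν dist(p + rν, Γ)`, the infimum over all unit normals `ν` to `Γ` at `p`. -/
def deltaG {n : ℕ} (Γ : Set (En n)) (p : En n) (r : ℝ) : ℝ :=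
  sInf {d : ℝ | ∃ ν : En n, IsUnitNormal Γ p ν ∧ d = Metric.infDist (p + r • ν) Γ}

/-- `Γ ⊆ ℝⁿ` is a C¹-smooth embedded submanifold of dimension `k`: near each of its points
it is the regular zero level set of a C¹ map into `ℝ^{n-k}`. -/
def IsC1Submanifold {n : ℕ} (k : ℕ) (Γ : Set (En n)) : Prop :=
  ∀ p ∈ Γ, ∃ (V : Set (En n)) (f : En n → EuclideanSpace ℝ (Fin (n - k))),
    IsOpen V ∧ p ∈ V ∧ ContDiffOn ℝ 1 f V ∧
    Γ ∩ V = {y ∈ V | f y = 0} ∧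
    ∀ y ∈ V, Function.Surjective ⇑(fderivWithin ℝ f V y)

/-- The set `W = (ℝⁿ × (0, ρ)) \ ( ⋃_{d(x) > 2ρ} B_{2ρ}((x,0)) ∪ ⋃_{d(x) ≤ 2ρ} B_{d(x)}((x,0)) )`,
where `d(x) = dist(x, Γ)`. -/
def Wset {n : ℕ} (Γ : Set (En n)) (ρ : ℝ) : Set (En1 n) :=
  {q : En1 n | 0 < snd1 n q ∧ snd1 n q < ρ} \
    ((⋃ x ∈ {x : En n | 2 * ρ < Metric.infDist x Γ}, Metric.ball (emb1 n (x, 0)) (2 * ρ)) ∪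
     (⋃ x ∈ {x : En n | Metric.infDist x Γ ≤ 2 * ρ},
        Metric.ball (emb1 n (x, 0)) (Metric.infDist x Γ)))

/-!
Near `x`, `Γ` is the regular zero set of a C¹ map `f` with derivative `D`. By the implicit
function theorem `ker D` lies in the tangent cone of `Γ`. Every `e = D† g` is a normal direction,
`⟪e, q - x⟫ = o(‖q - x‖)` on `Γ`, so `dist(x + r e, Γ) = r ‖e‖ + o(r)` as `r → 0⁺`. Since `W`
avoids the ball of that radius around `(x + r e, 0)`, blowing up along a sequence `c i → ∞` with
`r = A / c i` shows that a tangent vector `(w, s)` of `W` satisfies `A ‖e‖ ≤ ‖(w - A e, s)‖` for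
all `A > 0`, hence `⟪e, w⟫ ≤ 0`; for `e = D† (D w)` this is `‖D w‖² ≤ 0`. Conversely
`Γ × (0, ρ) ⊆ W`, and the heights over a tangent sequence of `Γ` can be chosen to produce any
vertical component `s ≥ 0`.
-/

open Topology

section TangentCone

variable {E : Type*} [NormedAddCommGroup E] [NormedSpace ℝ E] {S : Set E} {p w : E}

theorem mem_fTan_of_eventually {q : ℕ → E} {c : ℕ → ℝ} (hqS : ∀ᶠ i in atTop, q i ∈ S)
    (hc : ∀ᶠ i in atTop, 0 < c i) (hq : Tendsto q atTop (𝓝 p))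
    (hcq : Tendsto (fun i => c i • (q i - p)) atTop (𝓝 w)) : w ∈ fTan S p := by
  obtain ⟨N, hN⟩ := eventually_atTop.1 (hqS.and hc)
  exact ⟨fun i => q (i + N), fun i => c (i + N), fun i => (hN _ (Nat.le_add_left N i)).1,
    fun i => (hN _ (Nat.le_add_left N i)).2, (tendsto_add_atTop_iff_nat N).2 hq,
    (tendsto_add_atTop_iff_nat N).2 hcq⟩

theorem tendsto_atTop_of_tendsto_smul_sub {q : ℕ → E} {c : ℕ → ℝ} (hc : ∀ i, 0 < c i)
    (hq : Tendsto q atTop (𝓝 p)) (hcq : Tendsto (fun i => c i • (q i - p)) atTop (𝓝 w))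
    (hw : w ≠ 0) : Tendsto c atTop atTop := by
  have hne : ∀ᶠ i in atTop, q i - p ≠ 0 :=
    (hcq.eventually (eventually_ne_nhds hw)).mono fun i hi h => hi (by rw [h, smul_zero])
  have hdist : Tendsto (fun i => ‖q i - p‖) atTop (𝓝[>] 0) :=
    tendsto_nhdsWithin_iff.2 ⟨by simpa using (hq.sub_const p).norm,
      hne.mono fun i hi => norm_pos_iff.2 hi⟩
  refine (hcq.norm.pos_mul_atTop (norm_pos_iff.2 hw) (tendsto_inv_nhdsGT_zero.comp hdist)).congr'
    (hne.mono fun i hi => ?_)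
  simp only [Function.comp_apply, norm_smul, Real.norm_of_nonneg (hc i).le]
  exact mul_inv_cancel_right₀ (norm_ne_zero_iff.2 hi) (c i)

theorem exists_seq_tendsto_atTop_of_mem_fTan (hp : p ∈ S) (hw : w ∈ fTan S p) :
    ∃ (q : ℕ → E) (c : ℕ → ℝ), (∀ i, q i ∈ S) ∧ Tendsto c atTop atTop ∧
      Tendsto q atTop (𝓝 p) ∧ Tendsto (fun i => c i • (q i - p)) atTop (𝓝 w) := by
  rcases eq_or_ne w 0 with rfl | hw0
  · exact ⟨fun _ => p, fun i => i, fun _ => hp, tendsto_natCast_atTop_atTop, tendsto_const_nhds,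
      by simp⟩
  · obtain ⟨q, c, hqS, hc, hq, hcq⟩ := hw
    exact ⟨q, c, hqS, tendsto_atTop_of_tendsto_smul_sub hc hq hcq hw0, hq, hcq⟩

theorem mem_fTan_of_hasDerivAt {γ : ℝ → E} {v : E} (hγ : HasDerivAt γ v 0)
    (hS : ∀ᶠ t in 𝓝[>] 0, γ t ∈ S) : v ∈ fTan S (γ 0) := by
  have ht : Tendsto (fun i : ℕ => 1 / ((i : ℝ) + 1)) atTop (𝓝[>] 0) :=
    tendsto_nhdsWithin_iff.2 ⟨tendsto_one_div_add_atTop_nhds_zero_nat,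
      Eventually.of_forall fun i => by simp only [Set.mem_Ioi]; positivity⟩
  refine mem_fTan_of_eventually (c := fun i => (1 / ((i : ℝ) + 1))⁻¹) (ht.eventually hS)
    (Eventually.of_forall fun i => by positivity)
    (hγ.continuousAt.tendsto.comp (ht.mono_right nhdsWithin_le_nhds)) ?_
  refine ((hasDerivAt_iff_tendsto_slope.1 hγ).comp
    (ht.mono_right (nhdsWithin_mono _ fun t ht => ne_of_gt ht))).congr fun i => ?_
  simp only [Function.comp_apply, slope_def_module, sub_zero]

end TangentCone

section LevelSet

variable {E F : Type*} [NormedAddCommGroup E] [NormedAddCommGroup F] {Γ : Set E} {f : E → F}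
  {p : E}

theorem ker_subset_fTan_of_level [NormedSpace ℝ E] [CompleteSpace E] [NormedSpace ℝ F]
    [FiniteDimensional ℝ F] {D : E →L[ℝ] F} (hf : HasStrictFDerivAt f D p) (hD : D.range = ⊤)
    (hΓ : ∀ᶠ y in 𝓝 p, f y = f p → y ∈ Γ) {v : E} (hv : v ∈ D.ker) : v ∈ fTan Γ p := by
  set φ := hf.implicitFunction f D hD (f p)
  let vk : D.ker := ⟨v, hv⟩
  have hline : Tendsto (fun t : ℝ => (f p, t • vk)) (𝓝 0) (𝓝 (f p, 0)) :=
    tendsto_const_nhds.prodMk_nhds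
      (by simpa using (tendsto_id (x := 𝓝 (0 : ℝ))).smul_const vk)
  have hγ : HasDerivAt (fun t : ℝ => φ (t • vk)) v 0 := by
    have hφ := (hf.to_implicitFunction hD).hasFDerivAt
    rw [← zero_smul ℝ vk] at hφ
    simpa [Function.comp_def] using
      hφ.comp_hasDerivAt (0 : ℝ) ((hasDerivAt_id (0 : ℝ)).smul_const vk)
  have hγ0 : φ ((0 : ℝ) • vk) = p := by
    rw [zero_smul]; exact hf.implicitFunction_apply_image hD
  have hlevel : ∀ᶠ t : ℝ in 𝓝 0, f (φ (t • vk)) = f p :=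
    hline.eventually (hf.map_implicitFunction_eq hD)
  have hΓ' : ∀ᶠ t : ℝ in 𝓝 0, f (φ (t • vk)) = f p → φ (t • vk) ∈ Γ :=
    (hγ0 ▸ hγ.continuousAt.tendsto : Tendsto (fun t : ℝ => φ (t • vk)) (𝓝 0) (𝓝 p)).eventually hΓ
  rw [← hγ0]
  exact mem_fTan_of_hasDerivAt hγ
    (nhdsWithin_le_nhds ((hlevel.and hΓ').mono fun t ht => ht.2 ht.1))

theorem isLittleO_inner_adjoint_of_level [InnerProductSpace ℝ E] [CompleteSpace E]
    [InnerProductSpace ℝ F] [CompleteSpace F] {D : E →L[ℝ] F} (hf : HasFDerivAt f D p)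
    (hΓ : ∀ᶠ y in 𝓝 p, y ∈ Γ → f y = f p) (g : F) :
    (fun q => ⟪ContinuousLinearMap.adjoint D g, q - p⟫) =o[𝓝[Γ] p] (fun q => q - p) := by
  have hDo : (fun q => D (q - p)) =o[𝓝[Γ] p] (fun q => q - p) := by
    refine (hf.isLittleO.mono nhdsWithin_le_nhds).neg_left.congr' ?_ EventuallyEq.rfl
    filter_upwards [eventually_nhdsWithin_iff.2 hΓ] with q hq
    simp [hq]
  simpa [ContinuousLinearMap.adjoint_inner_left] using
    ((innerSL ℝ g).isBigO_comp _ _).trans_isLittleO hDo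

end LevelSet

section NormalDirection

variable {E : Type*} [NormedAddCommGroup E] [InnerProductSpace ℝ E] {Γ : Set E} {p e : E}

theorem infDist_add_smul_le (hp : p ∈ Γ) {r : ℝ} (hr : 0 ≤ r) :
    infDist (p + r • e) Γ ≤ r * ‖e‖ :=
  (infDist_le_dist_of_mem hp).trans_eq
    (by rw [dist_eq_norm, add_sub_cancel_left, norm_smul, Real.norm_of_nonneg hr])

theorem eventually_mul_sub_le_infDist_add_smul (hp : p ∈ Γ)
    (he : (fun q => ⟪e, q - p⟫) =o[𝓝[Γ] p] (fun q => q - p)) {ε : ℝ} (hε : 0 < ε) :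
    ∀ᶠ r in 𝓝[>] 0, r * (‖e‖ - ε) ≤ infDist (p + r • e) Γ := by
  obtain ⟨δ, hδ, hnear⟩ := Metric.eventually_nhds_iff.1 (eventually_nhdsWithin_iff.1 (he.def hε))
  filter_upwards [self_mem_nhdsWithin, nhdsWithin_le_nhds
    (eventually_lt_nhds (show (0 : ℝ) < δ / (2 * (‖e‖ + 1)) by positivity))] with r hr hrδ
  have hr : 0 < r := hr
  have hre : r * ‖e‖ ≤ δ / 2 := by
    rw [lt_div_iff₀ (by positivity)] at hrδ
    nlinarith
  rcases le_or_gt ‖e‖ ε with hle | hlt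
  · exact (mul_nonpos_of_nonneg_of_nonpos hr.le (by linarith)).trans infDist_nonneg
  refine (le_infDist ⟨p, hp⟩).2 fun q hq => ?_
  rcases lt_or_ge (dist q p) δ with hqδ | hqδ
  · have hi := hnear hqδ hq
    rw [Real.norm_eq_abs, abs_le] at hi
    have hsq : (r * (‖e‖ - ε)) ^ 2 ≤ dist (p + r • e) q ^ 2 := by
      rw [dist_eq_norm, show p + r • e - q = r • e - (q - p) by abel, norm_sub_sq_real, norm_smul,
        real_inner_smul_left, Real.norm_of_nonneg hr.le]
      nlinarith [sq_nonneg (‖q - p‖ - r * ε), mul_le_mul_of_nonneg_left hi.2 hr.le,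
        mul_nonneg (mul_nonneg hr.le hr.le) (mul_nonneg hε.le (sub_nonneg.2 hlt.le))]
    exact (pow_le_pow_iff_left₀ (by nlinarith) dist_nonneg two_ne_zero).1 hsq
  · have hdist : dist (p + r • e) p = r * ‖e‖ := by
      rw [dist_eq_norm, add_sub_cancel_left, norm_smul, Real.norm_of_nonneg hr.le]
    nlinarith [dist_triangle q (p + r • e) p, dist_comm q (p + r • e)]

theorem tendsto_infDist_add_smul_div (hp : p ∈ Γ)
    (he : (fun q => ⟪e, q - p⟫) =o[𝓝[Γ] p] (fun q => q - p)) :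
    Tendsto (fun r => infDist (p + r • e) Γ / r) (𝓝[>] 0) (𝓝 ‖e‖) := by
  refine tendsto_order.2 ⟨fun a ha => ?_, fun b hb => ?_⟩
  · filter_upwards [self_mem_nhdsWithin,
      eventually_mul_sub_le_infDist_add_smul hp he (half_pos (sub_pos.2 ha))] with r hr hle
    have hr : 0 < r := hr
    rw [lt_div_iff₀ hr]
    nlinarith
  · filter_upwards [self_mem_nhdsWithin] with r hr
    have hr : 0 < r := hr
    rw [div_lt_iff₀ hr]
    nlinarith [infDist_add_smul_le (e := e) hp hr.le]

end NormalDirection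

section Wset

variable {n : ℕ} {Γ : Set (En n)} {ρ : ℝ}

theorem continuous_emb1 : Continuous (emb1 n) :=
  WithLp.prod_continuous_toLp 2 (En n) ℝ

theorem continuous_snd1 : Continuous (snd1 n) :=
  continuous_snd.comp (WithLp.prod_continuous_ofLp 2 (En n) ℝ)

theorem emb1_add (a a' : En n) (b b' : ℝ) :
    emb1 n (a + a', b + b') = emb1 n (a, b) + emb1 n (a', b') := rfl

theorem emb1_smul (c : ℝ) (a : En n) (b : ℝ) : emb1 n (c • a, c * b) = c • emb1 n (a, b) := rfl

theorem dist_le_dist_emb1 (a a' : En n) (b b' : ℝ) :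
    dist a a' ≤ dist (emb1 n (a, b)) (emb1 n (a', b')) := by
  rw [WithLp.prod_dist_eq_of_L2]
  exact Real.le_sqrt_of_sq_le (le_add_of_nonneg_right (sq_nonneg _))

theorem emb1_mem_Wset {q : En n} (hq : q ∈ Γ) {t : ℝ} (ht : 0 < t) (htρ : t < ρ) :
    emb1 n (q, t) ∈ Wset Γ ρ := by
  have hfar : ∀ x, infDist x Γ ≤ dist (emb1 n (q, t)) (emb1 n (x, 0)) := fun x =>
    (infDist_le_dist_of_mem hq).trans ((dist_comm x q).trans_le (dist_le_dist_emb1 q x t 0))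
  refine ⟨⟨ht, htρ⟩, ?_⟩
  simp only [mem_union, mem_iUnion, mem_ball, exists_prop, not_or, not_exists, not_and, not_lt]
  exact ⟨fun x hx => hx.le.trans (hfar x), fun x _ => hfar x⟩

theorem infDist_le_dist_of_mem_Wset {P : En1 n} (hP : P ∈ Wset Γ ρ) {x : En n}
    (hx : infDist x Γ ≤ 2 * ρ) : infDist x Γ ≤ dist P (emb1 n (x, 0)) :=
  not_lt.1 fun h => hP.2 (Or.inr (mem_biUnion hx (mem_ball.2 h)))

theorem snd1_nonneg_of_mem_fTan_Wset {x : En n} {Q : En1 n}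
    (hQ : Q ∈ fTan (Wset Γ ρ) (emb1 n (x, 0))) : 0 ≤ snd1 n Q := by
  obtain ⟨P, c, hPW, hc, -, hcP⟩ := hQ
  refine ge_of_tendsto ((continuous_snd1.tendsto Q).comp hcP) (Eventually.of_forall fun i => ?_)
  show 0 ≤ c i * (snd1 n (P i) - 0)
  exact mul_nonneg (hc i).le (sub_nonneg.2 (hPW i).1.1.le)

theorem mul_norm_le_norm_sub_of_mem_fTan_Wset (hρ : 0 < ρ) {p e : En n} (hp : p ∈ Γ)
    (he : (fun q => ⟪e, q - p⟫) =o[𝓝[Γ] p] (fun q => q - p)) {Q : En1 n}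
    (hQ : Q ∈ fTan (Wset Γ ρ) (emb1 n (p, 0))) (hQ0 : Q ≠ 0) {A : ℝ} (hA : 0 < A) :
    A * ‖e‖ ≤ ‖Q - emb1 n (A • e, 0)‖ := by
  obtain ⟨P, c, hPW, hc, hP, hcP⟩ := hQ
  have hc_top := tendsto_atTop_of_tendsto_smul_sub hc hP hcP hQ0
  have hr : Tendsto (fun i => A / c i) atTop (𝓝[>] 0) :=
    tendsto_nhdsWithin_iff.2 ⟨tendsto_const_nhds.div_atTop hc_top,
      Eventually.of_forall fun i => div_pos hA (hc i)⟩
  have hlhs : Tendsto (fun i => c i * infDist (p + (A / c i) • e) Γ) atTop (𝓝 (A * ‖e‖)) := by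
    refine (((tendsto_infDist_add_smul_div hp he).comp hr).const_mul A).congr fun i => ?_
    have := (hc i).ne'
    simp only [Function.comp_apply]
    field_simp
  have hrhs : Tendsto (fun i => ‖c i • (P i - emb1 n (p + (A / c i) • e, 0))‖) atTop
      (𝓝 ‖Q - emb1 n (A • e, 0)‖) := by
    refine ((hcP.sub_const (emb1 n (A • e, 0))).norm).congr fun i => ?_
    rw [show emb1 n (p + (A / c i) • e, 0) = emb1 n (p, 0) + (A / c i) • emb1 n (e, 0) by
        rw [← emb1_smul, ← emb1_add, mul_zero, add_zero], ← sub_sub, smul_sub (c i) (P i - _),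
      smul_smul, mul_div_cancel₀ _ (hc i).ne', ← emb1_smul, mul_zero]
  have hnear : ∀ᶠ i in atTop, infDist (p + (A / c i) • e) Γ ≤ 2 * ρ := by
    have hlim := (hr.mono_right nhdsWithin_le_nhds).mul_const ‖e‖
    rw [zero_mul] at hlim
    filter_upwards [hlim.eventually (eventually_le_nhds (by positivity : (0 : ℝ) < 2 * ρ))]
      with i hi
    exact (infDist_add_smul_le hp (div_pos hA (hc i)).le).trans hi
  refine le_of_tendsto_of_tendsto hlhs hrhs (hnear.mono fun i hi => ?_)
  dsimp only
  rw [norm_smul, Real.norm_of_nonneg (hc i).le, ← dist_eq_norm]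
  exact mul_le_mul_of_nonneg_left (infDist_le_dist_of_mem_Wset (hPW i) hi) (hc i).le

theorem inner_fst1_nonpos_of_mem_fTan_Wset (hρ : 0 < ρ) {p e : En n} (hp : p ∈ Γ)
    (he : (fun q => ⟪e, q - p⟫) =o[𝓝[Γ] p] (fun q => q - p)) {Q : En1 n}
    (hQ : Q ∈ fTan (Wset Γ ρ) (emb1 n (p, 0))) : ⟪e, fst1 n Q⟫ ≤ 0 := by
  rcases eq_or_ne Q 0 with rfl | hQ0
  · exact (inner_zero_right e).le
  set w := fst1 n Q
  set s := snd1 n Q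
  have hA : ∀ A > 0, 2 * A * ⟪e, w⟫ ≤ ‖w‖ ^ 2 + s ^ 2 := by
    intro A hA
    have hsq := pow_le_pow_left₀ (by positivity)
      (mul_norm_le_norm_sub_of_mem_fTan_Wset hρ hp he hQ hQ0 hA) 2
    rw [WithLp.prod_norm_sq_eq_of_L2] at hsq
    change (A * ‖e‖) ^ 2 ≤ ‖w - A • e‖ ^ 2 + ‖s - 0‖ ^ 2 at hsq
    rw [norm_sub_sq_real, norm_smul, real_inner_smul_right, Real.norm_of_nonneg hA.le, sub_zero,
      Real.norm_eq_abs, sq_abs, real_inner_comm] at hsq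
    nlinarith
  by_contra! hpos
  have h := hA ((‖w‖ ^ 2 + s ^ 2 + 1) / (2 * ⟪e, w⟫)) (by positivity)
  rw [mul_comm 2, mul_assoc, div_mul_cancel₀ _ (by positivity)] at h
  linarith

theorem mem_fTan_Wset_of_mem_fTan (hρ : 0 < ρ) {x w : En n} (hx : x ∈ Γ) (hw : w ∈ fTan Γ x)
    {s : ℝ} (hs : 0 ≤ s) : emb1 n (w, s) ∈ fTan (Wset Γ ρ) (emb1 n (x, 0)) := by
  obtain ⟨q, c, hqΓ, hc, hq, hcq⟩ := exists_seq_tendsto_atTop_of_mem_fTan hx hw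
  have hpos : ∀ᶠ i in atTop, 0 < c i := hc.eventually_gt_atTop 0
  have hcinv : Tendsto (fun i => (c i)⁻¹) atTop (𝓝 0) := tendsto_inv_atTop_zero.comp hc
  have hs' : Tendsto (fun i => s + (c i)⁻¹) atTop (𝓝 s) := by
    simpa using hcinv.const_add s
  -- `c i * t i = s + (c i)⁻¹ → s`; the extra `(c i)⁻¹` keeps the heights positive when `s = 0`
  set t := fun i => (s + (c i)⁻¹) * (c i)⁻¹
  have ht : Tendsto t atTop (𝓝 0) := by simpa using hs'.mul hcinv
  refine mem_fTan_of_eventually (q := fun i => emb1 n (q i, t i)) ?_ hpos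
    ((continuous_emb1.tendsto _).comp (hq.prodMk_nhds ht)) ?_
  · filter_upwards [hpos, ht.eventually (eventually_lt_nhds hρ)] with i hi hiρ
    have hinv := inv_pos.2 hi
    exact emb1_mem_Wset (hqΓ i) (mul_pos (add_pos_of_nonneg_of_pos hs hinv) hinv) hiρ
  · refine ((continuous_emb1.tendsto _).comp (hcq.prodMk_nhds hs')).congr' (hpos.mono fun i hi => ?_)
    change emb1 n (c i • (q i - x), s + (c i)⁻¹) = emb1 n (c i • (q i - x), c i * (t i - 0))
    rw [sub_zero, mul_comm, mul_assoc, inv_mul_cancel₀ hi.ne', mul_one]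

end Wset

theorem statement6_general
    (n k : ℕ)
    (Γ : Set (En n))
    (hman : IsC1Submanifold k Γ)
    (ρ : ℝ) (hρ : 0 < ρ) :
    ∀ x ∈ Γ, fTan (Wset Γ ρ) (emb1 n (x, 0)) =
      {q : En1 n | fst1 n q ∈ fTan Γ x ∧ 0 ≤ snd1 n q} := by
  intro x hx
  obtain ⟨V, f, hV, hxV, hf, hΓV, hsurj⟩ := hman x hx
  set D := fderiv ℝ f x
  have hD : HasStrictFDerivAt f D x :=
    (hf.contDiffAt (hV.mem_nhds hxV)).hasStrictFDerivAt one_ne_zero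
  have hDsurj : D.range = ⊤ := by
    have h := hsurj x hxV
    rw [fderivWithin_of_isOpen hV hxV] at h
    exact LinearMap.range_eq_top.2 h
  have hlevel : ∀ᶠ y in 𝓝 x, y ∈ Γ ↔ f y = f x := by
    have hfx : f x = 0 := (hΓV.subset ⟨hx, hxV⟩).2
    filter_upwards [hV.mem_nhds hxV] with y hy
    rw [hfx]
    exact ⟨fun h => (hΓV.subset ⟨h, hy⟩).2, fun h => (hΓV.superset ⟨hy, h⟩).1⟩
  ext Q
  refine ⟨fun hQ => ⟨ker_subset_fTan_of_level hD hDsurj (hlevel.mono fun _ h => h.2) ?_,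
    snd1_nonneg_of_mem_fTan_Wset hQ⟩, fun ⟨hw, hs⟩ => mem_fTan_Wset_of_mem_fTan hρ hx hw hs⟩
  have h := inner_fst1_nonpos_of_mem_fTan_Wset hρ hx
    (isLittleO_inner_adjoint_of_level hD.hasFDerivAt (hlevel.mono fun _ h => h.1) (D (fst1 n Q))) hQ
  rw [ContinuousLinearMap.adjoint_inner_left, real_inner_self_eq_norm_sq] at h
  exact norm_eq_zero.1 (pow_eq_zero_iff two_ne_zero |>.1 (le_antisymm h (sq_nonneg _)))

/-- with `Γ ⊂ ℝⁿ` a nonempty compact C¹ embedded `k`-submanifold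
(`1 ≤ k ≤ n−1`), `ρ > 0` with `δ(p, r) > r/2` for all `p ∈ Γ` and `0 < r < 2ρ`, and `W` as
defined above: for every `x ∈ Γ`, `Tan(W, (x,0)) = T_xΓ × [0, +∞)`, where the tangent
space `T_xΓ` is the tangent cone of `Γ` at `x`. -/
theorem statement6
    (n k : ℕ) (hk : 1 ≤ k) (hkn : k ≤ n - 1)
    (Γ : Set (En n)) (hne : Γ.Nonempty) (hcomp : IsCompact Γ)
    (hman : IsC1Submanifold k Γ)
    (ρ : ℝ) (hρ : 0 < ρ)
    (hδ : ∀ p ∈ Γ, ∀ r : ℝ, 0 < r → r < 2 * ρ → r / 2 < deltaG Γ p r) :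
    ∀ x ∈ Γ, fTan (Wset Γ ρ) (emb1 n (x, 0)) =
      {q : En1 n | fst1 n q ∈ fTan Γ x ∧ 0 ≤ snd1 n q} :=
  statement6_general n k Γ hman ρ hρ
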